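/- Let λ = λ₂/λ₁ with λ₁, λ₂ > 0. For any (a,b) ∈ C₂(x*,v*) and any fixed g ∈ R^n, h ∈ R^m, ⟨a,g⟩ + ⟨b,h⟩ ≤ ‖a‖₂·dist(g, λ₁·∂f(x*)) + ‖b‖₂·dist(h, λ₂·∂g(v*)). -/

import Mathlib

/-!
By Cauchy–Schwarz, `⟪a, x⟫ ≤ ‖a‖ * dist x p + ⟪a, p⟫` for every `p`. For `p = l₁ • u` and
`q = l₂ • s` with `u ∈ ∂f(x*)`, `s ∈ ∂g(v*)`, the cone condition gives
`⟪a, p⟫ + ⟪b, q⟫ = l₁ * (⟪a, u⟫ + λ * ⟪b, s⟫) ≤ 0`, and taking the infimum over `p` and then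
over `q` turns the distances into `infDist`.
-/

open scoped RealInnerProductSpace Pointwise

/-- Subdifferential of `f` at `x`. -/
def subdiffE {n : ℕ} (f : EuclideanSpace ℝ (Fin n) → ℝ) (x : EuclideanSpace ℝ (Fin n)) :
    Set (EuclideanSpace ℝ (Fin n)) :=
  {u | ∀ d : EuclideanSpace ℝ (Fin n), f (x + d) ≥ f x + ⟪u, d⟫}

open Metric

theorem le_mul_infDist_of_forall_le_mul_dist {X : Type*} [PseudoMetricSpace X] {s : Set X}
    (hs : s.Nonempty) {x : X} {r c : ℝ} (hc : 0 ≤ c) (h : ∀ y ∈ s, r ≤ c * dist x y) :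
    r ≤ c * infDist x s := by
  have : Nonempty s := hs.to_subtype
  rw [infDist_eq_iInf, Real.mul_iInf_of_nonneg hc]
  exact le_ciInf fun y ↦ h y y.2

section InnerProductSpace

variable {E F : Type*} [NormedAddCommGroup E] [InnerProductSpace ℝ E]
  [NormedAddCommGroup F] [InnerProductSpace ℝ F]

theorem real_inner_le_norm_mul_dist_add (a x p : E) : ⟪a, x⟫ ≤ ‖a‖ * dist x p + ⟪a, p⟫ := by
  have := real_inner_le_norm a (x - p)
  rw [inner_sub_right, ← dist_eq_norm] at this
  linarith

theorem inner_add_inner_le_norm_mul_infDist_add {S : Set E} {T : Set F}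
    (hS : S.Nonempty) (hT : T.Nonempty) {a : E} {b : F}
    (h : ∀ p ∈ S, ∀ q ∈ T, ⟪a, p⟫ + ⟪b, q⟫ ≤ 0) (x : E) (y : F) :
    ⟪a, x⟫ + ⟪b, y⟫ ≤ ‖a‖ * infDist x S + ‖b‖ * infDist y T := by
  have hS_bound : ∀ q ∈ T, ⟪a, x⟫ + ⟪b, y⟫ - ‖b‖ * dist y q ≤ ‖a‖ * infDist x S :=
    fun q hq ↦ le_mul_infDist_of_forall_le_mul_dist hS (norm_nonneg a) fun p hp ↦ by
      linarith [real_inner_le_norm_mul_dist_add a x p, real_inner_le_norm_mul_dist_add b y q,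
        h p hp q hq]
  have hT_bound : ⟪a, x⟫ + ⟪b, y⟫ - ‖a‖ * infDist x S ≤ ‖b‖ * infDist y T :=
    le_mul_infDist_of_forall_le_mul_dist hT (norm_nonneg b) fun q hq ↦ by
      linarith [hS_bound q hq]
  linarith

end InnerProductSpace

theorem cone_two_inner_product_bound_general {n m : ℕ}
    (f : EuclideanSpace ℝ (Fin n) → ℝ) (g : EuclideanSpace ℝ (Fin m) → ℝ)
    (xs : EuclideanSpace ℝ (Fin n)) (vs : EuclideanSpace ℝ (Fin m))
    (hfne : (subdiffE f xs).Nonempty)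
    (hgne : (subdiffE g vs).Nonempty)
    (l₁ l₂ : ℝ) (hl₁ : 0 < l₁)
    (a : EuclideanSpace ℝ (Fin n)) (b : EuclideanSpace ℝ (Fin m))
    (hab : ∀ u ∈ subdiffE f xs, ∀ s ∈ subdiffE g vs,
      ⟪a, u⟫ + (l₂ / l₁) * ⟪b, s⟫ ≤ 0)
    (gv : EuclideanSpace ℝ (Fin n)) (hv : EuclideanSpace ℝ (Fin m)) :
    ⟪a, gv⟫ + ⟪b, hv⟫ ≤
      ‖a‖ * Metric.infDist gv (l₁ • subdiffE f xs) +
      ‖b‖ * Metric.infDist hv (l₂ • subdiffE g vs) := by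
  refine inner_add_inner_le_norm_mul_infDist_add hfne.smul_set hgne.smul_set ?_ gv hv
  rintro _ ⟨u, hu, rfl⟩ _ ⟨s, hs, rfl⟩
  calc ⟪a, l₁ • u⟫ + ⟪b, l₂ • s⟫ = l₁ * (⟪a, u⟫ + (l₂ / l₁) * ⟪b, s⟫) := by
        rw [real_inner_smul_right, real_inner_smul_right]
        field_simp
    _ ≤ 0 := mul_nonpos_of_nonneg_of_nonpos hl₁.le (hab u hu s hs)

/-- for any `(a,b) ∈ C₂(x*,v*)` (with `λ = l₂/l₁`) and any fixed
`g ∈ ℝ^n`, `h ∈ ℝ^m`,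
`⟨a,g⟩ + ⟨b,h⟩ ≤ ‖a‖₂·dist(g, l₁·∂f(x*)) + ‖b‖₂·dist(h, l₂·∂g(v*))`. -/
theorem cone_two_inner_product_bound {n m : ℕ}
    (f : EuclideanSpace ℝ (Fin n) → ℝ) (g : EuclideanSpace ℝ (Fin m) → ℝ)
    (hf : ConvexOn ℝ Set.univ f) (hg : ConvexOn ℝ Set.univ g)
    (xs : EuclideanSpace ℝ (Fin n)) (vs : EuclideanSpace ℝ (Fin m))
    (hfne : (subdiffE f xs).Nonempty) (hfc : IsCompact (subdiffE f xs))
    (hgne : (subdiffE g vs).Nonempty) (hgc : IsCompact (subdiffE g vs))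
    (l₁ l₂ : ℝ) (hl₁ : 0 < l₁) (hl₂ : 0 < l₂)
    (a : EuclideanSpace ℝ (Fin n)) (b : EuclideanSpace ℝ (Fin m))
    (hab : ∀ u ∈ subdiffE f xs, ∀ s ∈ subdiffE g vs,
      ⟪a, u⟫ + (l₂ / l₁) * ⟪b, s⟫ ≤ 0)
    (gv : EuclideanSpace ℝ (Fin n)) (hv : EuclideanSpace ℝ (Fin m)) :
    ⟪a, gv⟫ + ⟪b, hv⟫ ≤
      ‖a‖ * Metric.infDist gv (l₁ • subdiffE f xs) +
      ‖b‖ * Metric.infDist hv (l₂ • subdiffE g vs) :=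
  cone_two_inner_product_bound_general f g xs vs hfne hgne l₁ l₂ hl₁ a b hab gv hv
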